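/- Let H be a closed topological subgroup of PGL(2,ℂ) containing a compact subgroup whose Zariski closure in PGL(2,ℂ) contains H, let 𝓗 ⊂ SL(2,ℂ) be the preimage of H under SL(2,ℂ) → PGL(2,ℂ), and assume the central extension 0 → ℤ/2ℤ → 𝓗 → H → 0 splits, with a fixed splitting γ : H → 𝓗. Fix d ∈ ℤ and let W = O_{ℂP¹}(d)^{⊕r} be an H-equivariant holomorphic vector bundle on ℂP¹. Then there is a finite dimensional complex H-module M such that W is holomorphically and H-equivariantly isomorphic to O_{ℂP¹}(d) ⊗_ℂ M, where O_{ℂP¹}(d) carries the H-equivariant structure obtained via γ from the natural SL(2,ℂ)-action on O_{ℂP¹}(d). -/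

import Mathlib

/-!
# Framework: holomorphic vector bundles on ℂP¹ and equivariant structures

We identify `ℂP¹` with the projectivization of `ℂ²`, i.e. the quotient of the punctured
cone `V := ℂ² ∖ {0}` by the scaling action of `ℂˣ`, with `SL(2,ℂ)` acting through the
standard action on `ℂ²`.

Every holomorphic vector bundle on `ℂP¹` becomes holomorphically trivial when pulled back
to the punctured cone `V` (it extends to a reflexive, hence free, sheaf on `ℂ²`).  Hence a
holomorphic vector bundle `E` on `ℂP¹` is faithfully encoded by a *factor of automorphy*:
a jointly holomorphic family `mult l v` of invertible matrices (`l ∈ ℂˣ`, `v ∈ V`)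
satisfying the cocycle condition `mult (l*m) v = mult l (m • v) * mult m v`; the total
space of the bundle is the quotient of `V × ℂⁿ` by `(v, w) ∼ (l • v, mult l v *ᵥ w)`,
mapping onto `ℂP¹ = V/ℂˣ`.  This is the structure `HVB` below.  Holomorphic bundle
homomorphisms are holomorphic matrix-valued maps on `V` intertwining the factors of
automorphy (`HVB.Hom`); a homomorphism is fibrewise injective/surjective/bijective iff
the corresponding matrix is, at every point of the cone.

The line bundle `O(d)` is `lineB d`, with factor of automorphy `l ^ d`; more generally
`stdB ds` is the direct sum `⊕ O(ds i)`.  The degree of a bundle, semistability and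
Harder–Narasimhan filtrations are defined below in the standard way.

For a subgroup `G ≤ SL(2,ℂ)`, a `G`-equivariant structure on `E` (structure `EquivStr`)
is an action of `G` on the total space covering the `G`-action on `ℂP¹`, each `g` acting
as a holomorphic vector bundle isomorphism; on the cone this is again a family of
matrices `a g v` with the appropriate cocycle and compatibility conditions.  The natural
`SL(2,ℂ)`-equivariant structure on `O(d)` (induced by the standard action on `ℂ²`) is
`natStr`, and `O(d) ⊗ M` for a finite-dimensional complex `G`-module `(M, θ)` is
`stdB` with the equivariant structure `twistStr G d m θ`.
-/

noncomputable section


/-- `SL(2,ℂ)`. -/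
abbrev SL2 : Type := Matrix.SpecialLinearGroup (Fin 2) ℂ

/-- `ℂ²`. -/
abbrev V2 : Type := Fin 2 → ℂ

/-- The complex projective line, the base space of all our bundles (for reference;
bundles are described by descent data along `{v : ℂ² | v ≠ 0} → ℂP¹`). -/
def CP1 : Type := Projectivization ℂ V2

instance : Fact (Even (Fintype.card (Fin 2))) := ⟨by rw [Fintype.card_fin]; exact ⟨1, rfl⟩⟩

instance : TopologicalSpace SL2 :=
  inferInstanceAs (TopologicalSpace {A : Matrix (Fin 2) (Fin 2) ℂ // A.det = 1})

/-- The action of `SL(2,ℂ)` on the punctured cone `ℂ² ∖ {0}` (descending to the standard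
action on `ℂP¹`). -/
def sact (g : SL2) (v : V2) : V2 := (g : Matrix (Fin 2) (Fin 2) ℂ).mulVec v

/-- Zariski-closed subsets of `SL(2,ℂ)`: common zero loci of families of polynomials in
the matrix entries. -/
def ZarClosed (s : Set SL2) : Prop :=
  ∃ T : Set (MvPolynomial (Fin 2 × Fin 2) ℂ),
    s = {g : SL2 | ∀ p ∈ T,
      MvPolynomial.eval (fun ij => (g : Matrix (Fin 2) (Fin 2) ℂ) ij.1 ij.2) p = 0}

/-- The Zariski closure of a subset of `SL(2,ℂ)`. -/
def zarClosure (s : Set SL2) : Set SL2 := ⋂₀ {t | ZarClosed t ∧ s ⊆ t}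

/-- The hypothesis on the subgroup `G ≤ SL(2,ℂ)`: it is a closed (topological) subgroup
containing a compact subgroup `K` whose Zariski closure in `SL(2,ℂ)` contains `G`. -/
structure GoodSL (G : Subgroup SL2) : Prop where
  closed : IsClosed (G : Set SL2)
  exists_compact : ∃ K : Subgroup SL2, K ≤ G ∧ IsCompact (K : Set SL2) ∧
    (G : Set SL2) ⊆ zarClosure (K : Set SL2)

/-- A holomorphic vector bundle on `ℂP¹`, encoded by a holomorphic factor of automorphy
on the punctured cone `{v : ℂ² | v ≠ 0}` (see the module docstring). -/
structure HVB where
  /-- indexing type of the fibre coordinates; the rank is its cardinality -/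
  ι : Type
  [fin : Fintype ι]
  [dec : DecidableEq ι]
  /-- the factor of automorphy: the total space is `(V × ℂ^ι)/((v,w) ∼ (l•v, mult l v *ᵥ w))` -/
  mult : ℂ → V2 → Matrix ι ι ℂ
  /-- `mult` is jointly holomorphic on `ℂˣ × (ℂ² ∖ {0})` -/
  holo : ∀ i j, DifferentiableOn ℂ (fun p : ℂ × V2 => mult p.1 p.2 i j)
      {p : ℂ × V2 | p.1 ≠ 0 ∧ p.2 ≠ 0}
  cocycle : ∀ (l m : ℂ) (v : V2), l ≠ 0 → m ≠ 0 → v ≠ 0 →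
      mult (l * m) v = mult l (m • v) * mult m v
  mult_one : ∀ v : V2, v ≠ 0 → mult 1 v = 1
  unit : ∀ (l : ℂ) (v : V2), l ≠ 0 → v ≠ 0 → IsUnit (mult l v)

attribute [instance] HVB.fin HVB.dec

/-- The rank of a holomorphic vector bundle. -/
def HVB.rank (E : HVB) : ℕ := Fintype.card E.ι

/-- A holomorphic homomorphism of holomorphic vector bundles on `ℂP¹`:
a holomorphic matrix-valued function on the punctured cone intertwining the two
factors of automorphy. -/
structure HVB.Hom (E F : HVB) where
  A : V2 → Matrix F.ι E.ι ℂ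
  holo : ∀ i j, DifferentiableOn ℂ (fun v => A v i j) {v : V2 | v ≠ 0}
  compat : ∀ (l : ℂ) (v : V2), l ≠ 0 → v ≠ 0 →
    A (l • v) * E.mult l v = F.mult l v * A v

/-- A bundle homomorphism is fibrewise injective (i.e. a subbundle inclusion). -/
def HVB.Hom.FibInjective {E F : HVB} (f : HVB.Hom E F) : Prop :=
  ∀ v : V2, v ≠ 0 → Function.Injective ((f.A v).mulVecLin)

/-- A bundle homomorphism is fibrewise surjective (i.e. a bundle quotient map). -/
def HVB.Hom.FibSurjective {E F : HVB} (f : HVB.Hom E F) : Prop :=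
  ∀ v : V2, v ≠ 0 → Function.Surjective ((f.A v).mulVecLin)

/-- A bundle homomorphism is an isomorphism of holomorphic vector bundles. -/
def HVB.Hom.IsIso {E F : HVB} (f : HVB.Hom E F) : Prop :=
  ∀ v : V2, v ≠ 0 → Function.Bijective ((f.A v).mulVecLin)

/-- `E` and `F` are isomorphic as holomorphic vector bundles on `ℂP¹`. -/
def HVB.IsIsomorphic (E F : HVB) : Prop := ∃ f : HVB.Hom E F, f.IsIso

/-- The holomorphic vector bundle `⊕ i, O(ds i)` on `ℂP¹`. -/
def stdB {ι : Type} [Fintype ι] [DecidableEq ι] (ds : ι → ℤ) : HVB where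
  ι := ι
  mult := fun l _ => Matrix.diagonal (fun i => l ^ ds i)
  holo := by
    intro i j
    rcases eq_or_ne i j with h | h
    · subst h
      simp only [Matrix.diagonal_apply_eq]
      exact (differentiableOn_zpow (ds i) {(0:ℂ)}ᶜ (Or.inl (by simp))).comp
        differentiable_fst.differentiableOn (fun p hp => hp.1)
    · simp only [Matrix.diagonal_apply_ne _ h]
      exact differentiableOn_const 0
  cocycle := by
    intro l m v hl hm hv
    rw [Matrix.diagonal_mul_diagonal]
    exact congrArg _ (funext fun i => mul_zpow l m (ds i))
  mult_one := by
    intro v hv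
    simp
  unit := by
    intro l v hl hv
    refine isUnit_iff_exists.2 ⟨Matrix.diagonal (fun i => (l ^ ds i)⁻¹), ?_, ?_⟩ <;>
      · rw [Matrix.diagonal_mul_diagonal]
        rw [show (1 : Matrix ι ι ℂ) = Matrix.diagonal (fun _ => 1) from (Matrix.diagonal_one).symm]
        refine congrArg _ (funext fun i => ?_)
        field_simp [zpow_ne_zero (ds i) hl]

/-- The line bundle `O(d)` on `ℂP¹`. -/
def lineB (d : ℤ) : HVB := stdB (fun _ : Fin 1 => d)

/-- The direct sum of a finite family of holomorphic vector bundles on `ℂP¹`. -/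
def dSum {κ : Type} [Fintype κ] [DecidableEq κ] (E : κ → HVB) : HVB where
  ι := Σ k : κ, (E k).ι
  mult := fun l v => Matrix.blockDiagonal' (fun k => (E k).mult l v)
  holo := by
    rintro ⟨i, x⟩ ⟨j, y⟩
    rcases eq_or_ne i j with h | h
    · subst h
      simpa only [Matrix.blockDiagonal'_apply_eq] using (E i).holo x y
    · simp only [Matrix.blockDiagonal'_apply_ne _ _ _ h]
      exact differentiableOn_const 0
  cocycle := by
    intro l m v hl hm hv
    show Matrix.blockDiagonal' (fun k => (E k).mult (l * m) v)
      = Matrix.blockDiagonal' (fun k => (E k).mult l (m • v))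
        * Matrix.blockDiagonal' (fun k => (E k).mult m v)
    rw [← Matrix.blockDiagonal'_mul]
    exact congrArg _ (funext fun k => (E k).cocycle l m v hl hm hv)
  mult_one := by
    intro v hv
    show Matrix.blockDiagonal' (fun k => (E k).mult 1 v) = 1
    rw [show (fun k => (E k).mult 1 v) = (1 : ∀ k, Matrix (E k).ι (E k).ι ℂ) from
      funext fun k => (E k).mult_one v hv]
    exact Matrix.blockDiagonal'_one
  unit := by
    intro l v hl hv
    show IsUnit (Matrix.blockDiagonal' (fun k => (E k).mult l v))
    choose B hB1 hB2 using fun k => isUnit_iff_exists.1 ((E k).unit l v hl hv)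
    refine isUnit_iff_exists.2 ⟨Matrix.blockDiagonal' B, ?_, ?_⟩
    · rw [← Matrix.blockDiagonal'_mul,
        show (fun k => (E k).mult l v * B k) = (1 : ∀ k, Matrix (E k).ι (E k).ι ℂ) from
          funext fun k => hB1 k]
      exact Matrix.blockDiagonal'_one
    · rw [← Matrix.blockDiagonal'_mul,
        show (fun k => B k * (E k).mult l v) = (1 : ∀ k, Matrix (E k).ι (E k).ι ℂ) from
          funext fun k => hB2 k]
      exact Matrix.blockDiagonal'_one

/-- `E` has degree `d` (equivalently, its determinant line bundle is `O(d)`; by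
Grothendieck's theorem `E` is isomorphic to a sum of line bundles, and the degree is the
sum of their degrees). -/
def HVB.IsDegree (E : HVB) (d : ℤ) : Prop :=
  ∃ ds : E.ι → ℤ, HVB.IsIsomorphic (stdB ds) E ∧ ∑ i, ds i = d

/-- `E` is a semistable holomorphic vector bundle on `ℂP¹`: for every nonzero subbundle
`F ⊆ E` one has `μ(F) ≤ μ(E)`, where `μ = degree/rank` is the slope. -/
def HVB.Semistable (E : HVB) : Prop :=
  ∀ (F : HVB) (j : HVB.Hom F E), j.FibInjective → 0 < F.rank →
    ∀ dF dE : ℤ, F.IsDegree dF → E.IsDegree dE → dF * (E.rank : ℤ) ≤ dE * (F.rank : ℤ)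

/-- The Harder–Narasimhan filtration `0 = E₀ ⊂ E₁ ⊂ ⋯ ⊂ E_ℓ = E` of a holomorphic vector
bundle on `ℂP¹`: the (unique) filtration by subbundles whose successive quotients
`Q i = E_{i+1}/E_i` are semistable of strictly decreasing slopes. -/
structure HNFiltration (E : HVB) where
  /-- the length `ℓ` of the filtration -/
  len : ℕ
  /-- the filtration steps `E₀, …, E_ℓ` -/
  F : Fin (len + 1) → HVB
  /-- the successive quotients `E_{i+1}/E_i` -/
  Q : Fin len → HVB
  /-- the inclusions `E_i ⊆ E_{i+1}` -/
  incl : ∀ i : Fin len, HVB.Hom (F i.castSucc) (F i.succ)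
  /-- the quotient maps `E_{i+1} → E_{i+1}/E_i` -/
  proj : ∀ i : Fin len, HVB.Hom (F i.succ) (Q i)
  /-- the inclusions `E_i ⊆ E` -/
  toAmb : ∀ i : Fin (len + 1), HVB.Hom (F i) E
  bot : (F 0).rank = 0
  top : (toAmb (Fin.last len)).IsIso
  incl_inj : ∀ i, (incl i).FibInjective
  toAmb_inj : ∀ i, (toAmb i).FibInjective
  compat : ∀ (i : Fin len) (v : V2), v ≠ 0 →
    (toAmb i.succ).A v * (incl i).A v = (toAmb i.castSucc).A v
  strict : ∀ i : Fin len, (F i.castSucc).rank < (F i.succ).rank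
  proj_surj : ∀ i, (proj i).FibSurjective
  exact : ∀ (i : Fin len) (v : V2) (_ : v ≠ 0),
    LinearMap.range ((incl i).A v).mulVecLin = LinearMap.ker ((proj i).A v).mulVecLin
  semistable_quot : ∀ i, (Q i).Semistable
  slope_strict_anti : ∀ i j : Fin len, i < j → ∀ d₁ d₂ : ℤ,
    (Q i).IsDegree d₁ → (Q j).IsDegree d₂ →
    d₂ * ((Q i).rank : ℤ) < d₁ * ((Q j).rank : ℤ)

theorem sact_sact (g h : SL2) (v : V2) : sact g (sact h v) = sact (g * h) v := by
  rw [sact, sact, sact, Matrix.mulVec_mulVec, Matrix.SpecialLinearGroup.coe_mul]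

theorem sact_one (v : V2) : sact 1 v = v := by
  rw [sact, Matrix.SpecialLinearGroup.coe_one, Matrix.one_mulVec]

theorem sact_zero (g : SL2) : sact g 0 = 0 := Matrix.mulVec_zero _

theorem sact_smul (g : SL2) (c : ℂ) (v : V2) : sact g (c • v) = c • sact g v :=
  Matrix.mulVec_smul _ _ _

theorem sact_ne_zero (g : SL2) {v : V2} (hv : v ≠ 0) : sact g v ≠ 0 := by
  intro h
  apply hv
  have : v = sact g⁻¹ (sact g v) := by rw [sact_sact, inv_mul_cancel, sact_one]
  rw [this, h, sact_zero]
/-- A `G`-equivariant structure on the holomorphic vector bundle `E` on `ℂP¹`, for a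
subgroup `G ≤ SL(2,ℂ)`: an action `φ` of `G` on the total space of `E` lifting the
action of `G` on `ℂP¹` (induced by the standard `SL(2,ℂ)`-action on `ℂ²`), such that
every `g ∈ G` acts as a holomorphic vector bundle isomorphism `E → E` over the
automorphism of `ℂP¹` given by `g`.  In cone coordinates, `g` sends the point
`(v, w)` of the total space to `(sact g v, a g v *ᵥ w)`. -/
structure EquivStr (G : Subgroup SL2) (E : HVB) where
  a : G → V2 → Matrix E.ι E.ι ℂ
  holo : ∀ (g : G) (i j : E.ι), DifferentiableOn ℂ (fun v => a g v i j) {v : V2 | v ≠ 0}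
  unit : ∀ (g : G) (v : V2), v ≠ 0 → IsUnit (a g v)
  one : ∀ v : V2, v ≠ 0 → a 1 v = 1
  mul : ∀ (g h : G) (v : V2), v ≠ 0 → a (g * h) v = a g (sact ↑h v) * a h v
  compat : ∀ (g : G) (l : ℂ) (v : V2), l ≠ 0 → v ≠ 0 →
    a g (l • v) * E.mult l v = E.mult l (sact ↑g v) * a g v

/-- A homomorphism of `G`-equivariant holomorphic vector bundles: a holomorphic bundle
homomorphism commuting with the two actions of `G`. -/
def HVB.Hom.IsEquivariant {G : Subgroup SL2} {E F : HVB} (f : HVB.Hom E F)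
    (φE : EquivStr G E) (φF : EquivStr G F) : Prop :=
  ∀ (g : G) (v : V2), v ≠ 0 → f.A (sact ↑g v) * φE.a g v = φF.a g v * f.A v

/-- An isomorphism of `G`-equivariant holomorphic vector bundles on `ℂP¹`
("holomorphically and `G`-equivariantly isomorphic"). -/
structure EqIso {G : Subgroup SL2} {E F : HVB} (φE : EquivStr G E) (φF : EquivStr G F) where
  hom : HVB.Hom E F
  iso : hom.IsIso
  equivariant : hom.IsEquivariant φE φF

/-- The natural `G`-equivariant structure, for `G ≤ SL(2,ℂ)`, on the bundle
`⊕ i, O(ds i)`, induced by the standard action of `SL(2,ℂ)` on `ℂ²`. -/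
def natStr (G : Subgroup SL2) {ι : Type} [Fintype ι] [DecidableEq ι] (ds : ι → ℤ) :
    EquivStr G (stdB ds) where
  a := fun _ _ => 1
  holo := fun g i j => differentiableOn_const _
  unit := fun g v _ => isUnit_one
  one := fun v _ => rfl
  mul := fun g h v _ => (one_mul 1).symm
  compat := fun g l v _ _ => by rw [one_mul, mul_one]; rfl

/-- The `G`-equivariant holomorphic vector bundle `O(d) ⊗_ℂ M` on `ℂP¹`, where `M` is a
finite-dimensional complex `G`-module given by a representation
`θ : G →* GL(m, ℂ)`: the underlying bundle is `O(d)^{⊕ m}`, equipped with the tensor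
product of the natural `SL(2,ℂ)`-equivariant structure on `O(d)` and the `G`-action on
`M`. -/
def twistStr (G : Subgroup SL2) (d : ℤ) (m : ℕ)
    (θ : G →* (Matrix (Fin m) (Fin m) ℂ)ˣ) :
    EquivStr G (stdB (fun _ : Fin m => d)) where
  a := fun g _ => (θ g : Matrix (Fin m) (Fin m) ℂ)
  holo := fun g i j => differentiableOn_const _
  unit := fun g v _ => (θ g).isUnit
  one := fun v _ => by simp <;> rfl
  mul := fun g h v _ => by simp <;> rfl
  compat := by
    intro g l v hl hv
    show (θ g : Matrix (Fin m) (Fin m) ℂ) * Matrix.diagonal (fun _ : Fin m => l ^ d)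
      = Matrix.diagonal (fun _ : Fin m => l ^ d) * (θ g : Matrix (Fin m) (Fin m) ℂ)
    ext i j
    rw [Matrix.mul_diagonal, Matrix.diagonal_mul, mul_comm]

/-- The direct sum of a finite family of `G`-equivariant holomorphic vector bundles. -/
def dSumStr {G : Subgroup SL2} {κ : Type} [Fintype κ] [DecidableEq κ] {E : κ → HVB}
    (φ : ∀ k, EquivStr G (E k)) : EquivStr G (dSum E) where
  a := fun g v => Matrix.blockDiagonal' (fun k => (φ k).a g v)
  holo := by
    rintro g ⟨i, x⟩ ⟨j, y⟩
    rcases eq_or_ne i j with h | h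
    · subst h
      simpa only [Matrix.blockDiagonal'_apply_eq] using (φ i).holo g x y
    · simp only [Matrix.blockDiagonal'_apply_ne _ _ _ h]
      exact differentiableOn_const 0
  unit := by
    intro g v hv
    choose B hB1 hB2 using fun k => isUnit_iff_exists.1 ((φ k).unit g v hv)
    refine isUnit_iff_exists.2 ⟨Matrix.blockDiagonal' B, ?_, ?_⟩
    · show (Matrix.blockDiagonal' fun k => (φ k).a g v) * Matrix.blockDiagonal' B
        = (1 : Matrix (Σ k, (E k).ι) (Σ k, (E k).ι) ℂ)
      rw [← Matrix.blockDiagonal'_mul,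
        show (fun k => (φ k).a g v * B k) = (1 : ∀ k, Matrix (E k).ι (E k).ι ℂ) from
          funext fun k => hB1 k]
      exact Matrix.blockDiagonal'_one
    · show Matrix.blockDiagonal' B * (Matrix.blockDiagonal' fun k => (φ k).a g v)
        = (1 : Matrix (Σ k, (E k).ι) (Σ k, (E k).ι) ℂ)
      rw [← Matrix.blockDiagonal'_mul,
        show (fun k => B k * (φ k).a g v) = (1 : ∀ k, Matrix (E k).ι (E k).ι ℂ) from
          funext fun k => hB2 k]
      exact Matrix.blockDiagonal'_one
  one := by
    intro v hv
    show Matrix.blockDiagonal' (fun k => (φ k).a 1 v) = 1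
    rw [show (fun k => (φ k).a 1 v) = (1 : ∀ k, Matrix (E k).ι (E k).ι ℂ) from
      funext fun k => (φ k).one v hv]
    exact Matrix.blockDiagonal'_one
  mul := by
    intro g h v hv
    show Matrix.blockDiagonal' (fun k => (φ k).a (g * h) v)
      = Matrix.blockDiagonal' (fun k => (φ k).a g (sact ↑h v))
        * Matrix.blockDiagonal' (fun k => (φ k).a h v)
    rw [← Matrix.blockDiagonal'_mul]
    exact congrArg _ (funext fun k => (φ k).mul g h v hv)
  compat := by
    intro g l v hl hv
    show Matrix.blockDiagonal' (fun k => (φ k).a g (l • v))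
        * Matrix.blockDiagonal' (fun k => (E k).mult l v)
      = Matrix.blockDiagonal' (fun k => (E k).mult l (sact ↑g v))
        * Matrix.blockDiagonal' (fun k => (φ k).a g v)
    rw [← Matrix.blockDiagonal'_mul, ← Matrix.blockDiagonal'_mul]
    exact congrArg _ (funext fun k => (φ k).compat g l v hl hv)

/-- The total space of the holomorphic vector bundle `E` on `ℂP¹`: the quotient of
`(ℂ² ∖ {0}) × ℂ^ι` by the relation `(v, w) ∼ (l • v, mult l v *ᵥ w)`, `l ∈ ℂˣ`. -/
def HVB.Tot (E : HVB) : Type :=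
  Quot (fun p q : {p : V2 × (E.ι → ℂ) // p.1 ≠ 0} =>
    ∃ l : ℂˣ, q.1.1 = (l : ℂ) • p.1.1 ∧ q.1.2 = (E.mult l p.1.1).mulVec p.1.2)

/-- Fibrewise scalar multiplication on the total space of a bundle. -/
instance (E : HVB) : SMul ℂ E.Tot :=
  ⟨fun c => Quot.map
    (fun p => ⟨(p.1.1, c • p.1.2), p.2⟩)
    (by
      rintro p q ⟨l, h1, h2⟩
      exact ⟨l, h1, by simp [h2, Matrix.mulVec_smul]⟩)⟩

/-- The action of `g ∈ G` on the total space of a `G`-equivariant holomorphic vector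
bundle: `g ⋅ [v, w] = [sact g v, a g v *ᵥ w]`. -/
def EquivStr.act {G : Subgroup SL2} {E : HVB} (φ : EquivStr G E) (g : G) :
    E.Tot → E.Tot :=
  Quot.map
    (fun p => ⟨(sact ↑g p.1.1, (φ.a g p.1.1).mulVec p.1.2), sact_ne_zero _ p.2⟩)
    (by
      rintro ⟨⟨v, w⟩, hv⟩ ⟨⟨v', w'⟩, hv'⟩ ⟨l, h1, h2⟩
      dsimp only at h1 h2 hv ⊢
      subst h1; subst h2
      refine ⟨l, sact_smul _ _ _, ?_⟩
      rw [Matrix.mulVec_mulVec, Matrix.mulVec_mulVec,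
        φ.compat g (l : ℂ) v (Units.ne_zero l) hv])
/-! ## `PGL(2,ℂ)` and equivariant bundles for subgroups of `PGL(2,ℂ)` -/

/-- The subgroup `{±I} ≤ SL(2,ℂ)`. -/
def Z2 : Subgroup SL2 := Subgroup.zpowers (-1 : SL2)

theorem commute_neg_one (g : SL2) : Commute (-1 : SL2) g := by
  show (-1 : SL2) * g = g * (-1)
  rw [neg_one_mul, mul_neg_one]

instance : Z2.Normal := by
  constructor
  intro n hn g
  rcases Subgroup.mem_zpowers_iff.1 hn with ⟨k, hk⟩
  have hc : Commute n g := by rw [← hk]; exact (commute_neg_one g).zpow_left k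
  have : g * n * g⁻¹ = n := by rw [← hc.eq, mul_assoc, mul_inv_cancel, mul_one]
  rw [this]; exact hn

theorem neg_one_zpow_two_SL2 : (-1 : SL2) ^ (2 : ℤ) = 1 := by
  rw [show (2:ℤ) = 1 + 1 from rfl, zpow_add, zpow_one, neg_one_mul, neg_neg]

theorem neg_one_ne_one_SL2 : (-1 : SL2) ≠ 1 := by
  intro h
  have h2 : ((-1 : SL2) : Matrix (Fin 2) (Fin 2) ℂ) 0 0
      = ((1 : SL2) : Matrix (Fin 2) (Fin 2) ℂ) 0 0 := by rw [h]
  simp only [Matrix.SpecialLinearGroup.coe_neg, Matrix.SpecialLinearGroup.coe_one,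
    Matrix.neg_apply, Matrix.one_apply_eq] at h2
  norm_num at h2

theorem mem_Z2_iff {x : SL2} : x ∈ Z2 ↔ x = 1 ∨ x = -1 := by
  constructor
  · intro hx
    rcases Subgroup.mem_zpowers_iff.1 hx with ⟨k, hk⟩
    rcases Int.even_or_odd k with ⟨r, hr⟩ | ⟨r, hr⟩
    · left
      rw [← hk, hr, show r + r = 2 * r by ring, zpow_mul, neg_one_zpow_two_SL2, one_zpow]
    · right
      rw [← hk, hr, zpow_add, zpow_mul, neg_one_zpow_two_SL2, one_zpow, zpow_one, one_mul]
  · rintro (rfl | rfl)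
    · exact Z2.one_mem
    · exact Subgroup.mem_zpowers _

/-- `PGL(2,ℂ) = SL(2,ℂ)/{±I}` (isomorphic to the group of holomorphic automorphisms of
`ℂP¹`, acting through the standard action of `SL(2,ℂ)` on `ℂ²`). -/
def PGL2 : Type := SL2 ⧸ Z2

instance : Group PGL2 := inferInstanceAs (Group (SL2 ⧸ Z2))
instance : TopologicalSpace PGL2 := inferInstanceAs (TopologicalSpace (SL2 ⧸ Z2))

/-- The quotient homomorphism `β : SL(2,ℂ) → PGL(2,ℂ)`. -/
def βhom : SL2 →* PGL2 := QuotientGroup.mk' Z2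

theorem βhom_neg_one : βhom (-1) = 1 :=
  (QuotientGroup.eq_one_iff _).2 (Subgroup.mem_zpowers _)

/-- Zariski-closed subsets of `PGL(2,ℂ)`: subsets whose preimage in `SL(2,ℂ)` is
Zariski closed. -/
def PZarClosed (s : Set PGL2) : Prop := ZarClosed (βhom ⁻¹' s)

/-- The Zariski closure of a subset of `PGL(2,ℂ)`. -/
def pzarClosure (s : Set PGL2) : Set PGL2 := ⋂₀ {t | PZarClosed t ∧ s ⊆ t}

/-- The hypothesis on the subgroup `H ≤ PGL(2,ℂ)`: it is a closed (topological) subgroup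
containing a compact subgroup `K` whose Zariski closure in `PGL(2,ℂ)` contains `H`. -/
structure GoodPGL (H : Subgroup PGL2) : Prop where
  closed : IsClosed (H : Set PGL2)
  exists_compact : ∃ K : Subgroup PGL2, K ≤ H ∧ IsCompact (K : Set PGL2) ∧
    (H : Set PGL2) ⊆ pzarClosure (K : Set PGL2)

/-- The central short exact sequence `1 → ℤ/2ℤ → 𝓗 → H → 1` (where `𝓗 = β⁻¹(H)` is the
preimage of `H` in `SL(2,ℂ)`) splits: there is a homomorphism `γ : H → 𝓗 ⊆ SL(2,ℂ)`
with `β ∘ γ = Id_H`. -/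
def ExtSplits (H : Subgroup PGL2) : Prop :=
  ∃ γ : H →* SL2, ∀ h : H, βhom (γ h) = (h : PGL2)

theorem neg_one_mem_preH (H : Subgroup PGL2) : (-1 : SL2) ∈ H.comap βhom := by
  have : βhom (-1) ∈ H := by rw [βhom_neg_one]; exact H.one_mem
  exact this

/-- The restriction `β' : 𝓗 → H` of `β` to `𝓗 = β⁻¹(H)`. -/
def βres (H : Subgroup PGL2) : ↥(H.comap βhom) →* ↥H :=
  MonoidHom.codRestrict (βhom.comp (H.comap βhom).subtype) H (fun x => x.2)

/-- An `H`-equivariant structure on a holomorphic vector bundle `E` on `ℂP¹`, for a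
subgroup `H ≤ PGL(2,ℂ)` acting on `ℂP¹` via the identification of `PGL(2,ℂ)` with
`Aut(ℂP¹)`: an action of `H` on the total space of `E` lifting the `H`-action on `ℂP¹`,
each `h ∈ H` acting as a holomorphic vector bundle isomorphism.  Equivalently (and this
is how we encode it), it is an equivariant structure for the preimage
`𝓗 = β⁻¹(H) ≤ SL(2,ℂ)` in which the central element `-I` acts trivially on the total
space; the latter condition reads `a (-I) v = mult (-1) v` in cone coordinates, since
`-I` moves the cone point `v` to `-v`. -/
structure HEquivStr (H : Subgroup PGL2) (E : HVB) where
  toStr : EquivStr (H.comap βhom) E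
  negOne : ∀ v : V2, v ≠ 0 →
    toStr.a ⟨-1, neg_one_mem_preH H⟩ v = E.mult (-1) v

/-- The direct sum of a finite family of `H`-equivariant holomorphic vector bundles. -/
def dSumH {H : Subgroup PGL2} {κ : Type} [Fintype κ] [DecidableEq κ] {E : κ → HVB}
    (φ : ∀ k, HEquivStr H (E k)) : HEquivStr H (dSum E) where
  toStr := dSumStr (fun k => (φ k).toStr)
  negOne := by
    intro v hv
    show Matrix.blockDiagonal' (fun k => (φ k).toStr.a ⟨-1, neg_one_mem_preH H⟩ v)
      = Matrix.blockDiagonal' (fun k => (E k).mult (-1) v)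
    exact congrArg _ (funext fun k => (φ k).negOne v hv)

theorem neg_one_zpow_even_C (d : ℤ) : (-1 : ℂ) ^ (2 * d) = 1 := by
  rw [zpow_mul]; norm_num

theorem neg_one_zpow_odd_C (d : ℤ) : (-1 : ℂ) ^ (2 * d + 1) = -1 := by
  rw [zpow_add₀ (by norm_num : (-1:ℂ) ≠ 0), zpow_mul]; norm_num

theorem smul_one_eq_diagonal' {ι : Type} [Fintype ι] [DecidableEq ι] (c : ℂ) :
    c • (1 : Matrix ι ι ℂ) = Matrix.diagonal (fun _ : ι => c) := by
  ext i j
  rw [Matrix.smul_apply, Matrix.one_apply, Matrix.diagonal_apply]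
  split <;> simp

theorem isUnit_smul_matrix {ι : Type} [Fintype ι] [DecidableEq ι] {c : ℂ} (hc : c ≠ 0)
    {A : Matrix ι ι ℂ} (hA : IsUnit A) : IsUnit (c • A) := by
  rcases isUnit_iff_exists.1 hA with ⟨B, hB1, hB2⟩
  refine isUnit_iff_exists.2 ⟨c⁻¹ • B, ?_, ?_⟩
  · rw [smul_mul_assoc, mul_smul_comm, smul_smul, hB1, mul_inv_cancel₀ hc, one_smul]
  · rw [smul_mul_assoc, mul_smul_comm, smul_smul, hB2, inv_mul_cancel₀ hc, one_smul]

/-- The `H`-equivariant structure on `O(2d) ⊗_ℂ M`, for a finite-dimensional complex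
`H`-module `(M, θ)`: the tensor product of the natural `PGL(2,ℂ)`-equivariant structure
on the even line bundle `O(2d)` with the `H`-action on `M`. -/
def evenTwistH (H : Subgroup PGL2) (d : ℤ) (m : ℕ)
    (θ : ↥H →* (Matrix (Fin m) (Fin m) ℂ)ˣ) :
    HEquivStr H (stdB (fun _ : Fin m => 2 * d)) where
  toStr :=
  { a := fun g _ => (θ (βres H g) : Matrix (Fin m) (Fin m) ℂ)
    holo := fun g i j => differentiableOn_const _
    unit := fun g v _ => (θ (βres H g)).isUnit
    one := fun v _ => by simp <;> rfl
    mul := fun g h v _ => by simp <;> rfl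
    compat := by
      intro g l v hl hv
      show (θ (βres H g) : Matrix (Fin m) (Fin m) ℂ) * Matrix.diagonal (fun _ : Fin m => l ^ (2*d))
        = Matrix.diagonal (fun _ : Fin m => l ^ (2*d)) * (θ (βres H g) : Matrix (Fin m) (Fin m) ℂ)
      ext i j
      rw [Matrix.mul_diagonal, Matrix.diagonal_mul, mul_comm] }
  negOne := by
    intro v hv
    have h1 : βres H ⟨-1, neg_one_mem_preH H⟩ = 1 := by
      apply Subtype.ext
      show βhom (-1) = 1
      exact βhom_neg_one
    show (θ (βres H ⟨-1, neg_one_mem_preH H⟩) : Matrix (Fin m) (Fin m) ℂ)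
      = Matrix.diagonal (fun _ : Fin m => (-1 : ℂ) ^ (2 * d))
    rw [h1, map_one, Units.val_one]
    simp [neg_one_zpow_even_C]

/-- The `H`-equivariant structure on `O(2d+1) ⊗_ℂ M`, for a finite-dimensional complex
`𝓗`-module `(M, θ)` on which the central element `-I ∈ 𝓗 = β⁻¹(H)` acts as
multiplication by `-1`: the diagonal `𝓗`-action on the tensor product of `O(2d+1)`
(with its natural `𝓗 ⊆ SL(2,ℂ)`-structure) with `M` descends to `H`. -/
def oddTwistH (H : Subgroup PGL2) (d : ℤ) (m : ℕ)
    (θ : ↥(H.comap βhom) →* (Matrix (Fin m) (Fin m) ℂ)ˣ)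
    (hθ : θ ⟨-1, neg_one_mem_preH H⟩ = -1) :
    HEquivStr H (stdB (fun _ : Fin m => 2 * d + 1)) where
  toStr :=
  { a := fun g _ => (θ g : Matrix (Fin m) (Fin m) ℂ)
    holo := fun g i j => differentiableOn_const _
    unit := fun g v _ => (θ g).isUnit
    one := fun v _ => by simp <;> rfl
    mul := fun g h v _ => by simp <;> rfl
    compat := by
      intro g l v hl hv
      show (θ g : Matrix (Fin m) (Fin m) ℂ) * Matrix.diagonal (fun _ : Fin m => l ^ (2*d+1))
        = Matrix.diagonal (fun _ : Fin m => l ^ (2*d+1)) * (θ g : Matrix (Fin m) (Fin m) ℂ)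
      ext i j
      rw [Matrix.mul_diagonal, Matrix.diagonal_mul, mul_comm] }
  negOne := by
    intro v hv
    show (θ ⟨-1, neg_one_mem_preH H⟩ : Matrix (Fin m) (Fin m) ℂ)
      = Matrix.diagonal (fun _ : Fin m => (-1 : ℂ) ^ (2 * d + 1))
    rw [hθ]
    simp only [neg_one_zpow_odd_C, ← smul_one_eq_diagonal']
    simp

theorem neg_ne_self_SL2 (x : SL2) : -x ≠ x := by
  intro h
  apply neg_one_ne_one_SL2
  have : (-1 : SL2) * x = 1 * x := by rw [neg_one_mul, one_mul, h]
  exact mul_right_cancel this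

open scoped Classical in
/-- The sign `ε(g) ∈ {±1}` comparing a lift `g ∈ 𝓗 ⊆ SL(2,ℂ)` with the chosen
splitting: `γ(β(g)) = ε(g)·g`. -/
noncomputable def sgn (H : Subgroup PGL2) (γ : ↥H →* SL2) (g : ↥(H.comap βhom)) : ℂ :=
  if γ (βres H g) = (g : SL2) then 1 else -1

theorem sgn_ne_zero (H : Subgroup PGL2) (γ : ↥H →* SL2) (g : ↥(H.comap βhom)) :
    sgn H γ g ≠ 0 := by
  unfold sgn; split <;> norm_num

theorem lift_dichotomy (H : Subgroup PGL2) (γ : ↥H →* SL2)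
    (hγ : ∀ h : ↥H, βhom (γ h) = (h : PGL2)) (g : ↥(H.comap βhom)) :
    γ (βres H g) = (g : SL2) ∨ γ (βres H g) = -(g : SL2) := by
  have hker : γ (βres H g) * (g : SL2)⁻¹ ∈ Z2 := by
    rw [← QuotientGroup.ker_mk' Z2]
    show βhom (γ (βres H g) * (g : SL2)⁻¹) = 1
    rw [map_mul, map_inv, hγ]
    show (βhom (g : SL2)) * (βhom (g : SL2))⁻¹ = 1
    rw [mul_inv_cancel]
  rcases mem_Z2_iff.1 hker with h | h
  · left
    have := congrArg (fun x => x * (g : SL2)) h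
    simpa [mul_assoc] using this
  · right
    have := congrArg (fun x => x * (g : SL2)) h
    simpa [mul_assoc, neg_one_mul] using this

theorem sgn_mul (H : Subgroup PGL2) (γ : ↥H →* SL2)
    (hγ : ∀ h : ↥H, βhom (γ h) = (h : PGL2)) (g h : ↥(H.comap βhom)) :
    sgn H γ (g * h) = sgn H γ g * sgn H γ h := by
  have hcoe : ((g * h : ↥(H.comap βhom)) : SL2) = (g : SL2) * (h : SL2) := rfl
  have hmul : γ (βres H (g * h)) = γ (βres H g) * γ (βres H h) := by
    rw [map_mul, map_mul]
  unfold sgn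
  rcases lift_dichotomy H γ hγ g with hg | hg <;>
    rcases lift_dichotomy H γ hγ h with hh | hh
  · have hgh : γ (βres H (g * h)) = ((g * h : ↥(H.comap βhom)) : SL2) := by
      rw [hmul, hg, hh, hcoe]
    rw [if_pos hgh, if_pos hg, if_pos hh, one_mul]
  · have hgh : γ (βres H (g * h)) = -((g * h : ↥(H.comap βhom)) : SL2) := by
      rw [hmul, hg, hh, hcoe, mul_neg]
    rw [if_neg (by rw [hgh]; exact neg_ne_self_SL2 _), if_pos hg,
      if_neg (by rw [hh]; exact neg_ne_self_SL2 _), one_mul]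
  · have hgh : γ (βres H (g * h)) = -((g * h : ↥(H.comap βhom)) : SL2) := by
      rw [hmul, hg, hh, hcoe, neg_mul]
    rw [if_neg (by rw [hgh]; exact neg_ne_self_SL2 _),
      if_neg (by rw [hg]; exact neg_ne_self_SL2 _), if_pos hh, mul_one]
  · have hgh : γ (βres H (g * h)) = ((g * h : ↥(H.comap βhom)) : SL2) := by
      rw [hmul, hg, hh, hcoe, neg_mul_neg]
    rw [if_pos hgh, if_neg (by rw [hg]; exact neg_ne_self_SL2 _),
      if_neg (by rw [hh]; exact neg_ne_self_SL2 _), neg_mul_neg, one_mul]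

theorem sgn_one (H : Subgroup PGL2) (γ : ↥H →* SL2) :
    sgn H γ 1 = 1 := by
  unfold sgn
  rw [if_pos]
  show γ (βres H 1) = ((1 : ↥(H.comap βhom)) : SL2)
  rw [map_one, map_one]; rfl

theorem sgn_neg_one (H : Subgroup PGL2) (γ : ↥H →* SL2) :
    sgn H γ ⟨-1, neg_one_mem_preH H⟩ = -1 := by
  unfold sgn
  rw [if_neg]
  intro hcon
  apply neg_one_ne_one_SL2
  have h1 : βres H ⟨-1, neg_one_mem_preH H⟩ = 1 := by
    apply Subtype.ext
    show βhom (-1) = 1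
    exact βhom_neg_one
  rw [h1, map_one] at hcon
  exact hcon.symm

/-- When the central extension `1 → ℤ/2ℤ → 𝓗 → H → 1` splits, via a splitting
`γ : H → 𝓗 ⊆ SL(2,ℂ)`, the line bundle `O(d)` carries the `H`-equivariant structure
obtained by restricting the natural `SL(2,ℂ)`-equivariant structure to `γ(H)`; this is
the resulting `H`-equivariant structure on `O(d) ⊗_ℂ M` for a finite-dimensional complex
`H`-module `(M, θ)`. -/
def splitTwistH (H : Subgroup PGL2) (γ : ↥H →* SL2)
    (hγ : ∀ h : ↥H, βhom (γ h) = (h : PGL2)) (d : ℤ) (m : ℕ)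
    (θ : ↥H →* (Matrix (Fin m) (Fin m) ℂ)ˣ) :
    HEquivStr H (stdB (fun _ : Fin m => d)) where
  toStr :=
  { a := fun g _ => (sgn H γ g) ^ d • (θ (βres H g) : Matrix (Fin m) (Fin m) ℂ)
    holo := fun g i j => differentiableOn_const _
    unit := fun g v _ =>
      isUnit_smul_matrix (zpow_ne_zero d (sgn_ne_zero H γ g)) (θ (βres H g)).isUnit
    one := fun v _ => by
      show sgn H γ 1 ^ d • (θ (βres H 1) : Matrix (Fin m) (Fin m) ℂ) = 1
      rw [sgn_one, one_zpow, map_one, map_one, Units.val_one, one_smul]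
    mul := by
      intro g h v _
      show sgn H γ (g * h) ^ d • (θ (βres H (g * h)) : Matrix (Fin m) (Fin m) ℂ)
        = (sgn H γ g ^ d • (θ (βres H g) : Matrix (Fin m) (Fin m) ℂ))
          * (sgn H γ h ^ d • (θ (βres H h) : Matrix (Fin m) (Fin m) ℂ))
      rw [sgn_mul H γ hγ, mul_zpow, map_mul, map_mul, Units.val_mul,
        smul_mul_assoc, mul_smul_comm, smul_smul]
    compat := by
      intro g l v hl hv
      show ((sgn H γ g) ^ d • (θ (βres H g) : Matrix (Fin m) (Fin m) ℂ))
          * Matrix.diagonal (fun _ : Fin m => l ^ d)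
        = Matrix.diagonal (fun _ : Fin m => l ^ d)
          * ((sgn H γ g) ^ d • (θ (βres H g) : Matrix (Fin m) (Fin m) ℂ))
      rw [smul_mul_assoc, mul_smul_comm]
      congr 1
      ext i j
      rw [Matrix.mul_diagonal, Matrix.diagonal_mul, mul_comm] }
  negOne := by
    intro v hv
    have h1 : βres H ⟨-1, neg_one_mem_preH H⟩ = 1 := by
      apply Subtype.ext
      show βhom (-1) = 1
      exact βhom_neg_one
    show (sgn H γ ⟨-1, neg_one_mem_preH H⟩) ^ d • (θ (βres H ⟨-1, neg_one_mem_preH H⟩) :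
        Matrix (Fin m) (Fin m) ℂ) = Matrix.diagonal (fun _ : Fin m => (-1 : ℂ) ^ d)
    rw [sgn_neg_one, h1, map_one, Units.val_one, ← smul_one_eq_diagonal']

/-!
Compatibility with the factor of automorphy `l ^ d • 1` of `O(d)^{⊕r}` says that every matrix
`a g v` of an equivariant structure is invariant under scaling `v`. A holomorphic function on a
finite-dimensional punctured space that is invariant under `ℂˣ` takes all its values on the
compact unit sphere, so it is bounded; by Liouville it is constant along every affine complex
line avoiding `0`, hence constant. Thus `a g v = ρ g` for a representation `ρ` of
`𝓗 = β⁻¹(H)` on `ℂ^r`, in which `-I` acts by `(-1)^d` (it acts trivially on the total space).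
Writing `γ (β g) = sgn g • g` gives `ρ g = (sgn g)^d • ρ (γ (β g))`, which is the structure of
`O(d) ⊗ M` with `M = ρ ∘ γ`, and the identity matrix is an equivariant isomorphism.
-/

section SmulInvariant

variable {E : Type*} [NormedAddCommGroup E] [NormedSpace ℂ E] [ProperSpace E]

theorem isBounded_image_ne_zero_of_smul_invariant {F : Type*} [PseudoMetricSpace F] {A : E → F}
    (hA : ContinuousOn A {v | v ≠ 0})
    (hinv : ∀ (c : ℂ) (v : E), c ≠ 0 → v ≠ 0 → A (c • v) = A v) :
    Bornology.IsBounded (A '' {v | v ≠ 0}) := by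
  have hsphere : Metric.sphere (0 : E) 1 ⊆ {v | v ≠ 0} := fun v hv =>
    ne_zero_of_mem_sphere one_ne_zero ⟨v, hv⟩
  refine ((isCompact_sphere 0 1).image_of_continuousOn (hA.mono hsphere)).isBounded.subset ?_
  rintro _ ⟨v, hv, rfl⟩
  have hv' : v ≠ 0 := hv
  refine ⟨(‖v‖⁻¹ : ℂ) • v, by simpa using norm_smul_inv_norm (𝕜 := ℂ) hv', hinv _ _ ?_ hv'⟩
  simpa using hv'

theorem apply_add_eq_of_smul_invariant {F : Type*} [NormedAddCommGroup F] [NormedSpace ℂ F]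
    {A : E → F} (hA : DifferentiableOn ℂ A {v | v ≠ 0})
    (hinv : ∀ (c : ℂ) (v : E), c ≠ 0 → v ≠ 0 → A (c • v) = A v) {v w : E}
    (hline : ∀ z : ℂ, v + z • w ≠ 0) : A (v + w) = A v := by
  have hdiff : Differentiable ℂ fun z : ℂ => A (v + z • w) := fun z =>
    (hA.differentiableAt (isOpen_ne.mem_nhds (hline z))).comp z
      ((differentiableAt_const v).add (differentiableAt_id.smul_const w))
  have hbdd : Bornology.IsBounded (Set.range fun z : ℂ => A (v + z • w)) :=
    (isBounded_image_ne_zero_of_smul_invariant hA.continuousOn hinv).subset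
      (Set.range_subset_iff.2 fun z => ⟨_, hline z, rfl⟩)
  simpa using hdiff.apply_eq_apply_of_bounded hbdd 1 0

theorem eq_of_smul_invariant {F : Type*} [NormedAddCommGroup F] [NormedSpace ℂ F]
    {A : E → F} (hA : DifferentiableOn ℂ A {v | v ≠ 0})
    (hinv : ∀ (c : ℂ) (v : E), c ≠ 0 → v ≠ 0 → A (c • v) = A v) {v w : E}
    (hv : v ≠ 0) (hw : w ≠ 0) : A v = A w := by
  by_cases hdep : ∃ z : ℂ, v + z • w = 0
  · obtain ⟨z, hz⟩ := hdep
    have hvw : v = (-z) • w := by rw [neg_smul, eq_neg_iff_add_eq_zero, hz]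
    have hz0 : -z ≠ 0 := by rintro h; rw [h, zero_smul] at hvw; exact hv hvw
    rw [hvw, hinv _ _ hz0 hw]
  · have hline : ∀ z : ℂ, v + z • w ≠ 0 := not_exists.1 hdep
    have hline' : ∀ z : ℂ, w + z • v ≠ 0 := by
      intro z hz
      have hz0 : z ≠ 0 := by rintro rfl; simp [hw] at hz
      apply hline z⁻¹
      calc v + z⁻¹ • w = z⁻¹ • (w + z • v) := by
            rw [smul_add, smul_smul, inv_mul_cancel₀ hz0, one_smul, add_comm]
        _ = 0 := by rw [hz, smul_zero]
    -- Liouville along the lines `v + ℂ w` and `w + ℂ v`, which meet at `v + w`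
    rw [← apply_add_eq_of_smul_invariant hA hinv hline,
      ← apply_add_eq_of_smul_invariant hA hinv hline', add_comm]

end SmulInvariant

theorem vec_one_zero_ne_zero : (![1, 0] : V2) ≠ 0 := by
  intro h; simpa using congrFun h 0

theorem stdB_mult_eq_smul_one {ι : Type} [Fintype ι] [DecidableEq ι] (d : ℤ) (l : ℂ) (v : V2) :
    (stdB fun _ : ι => d).mult l v = l ^ d • 1 :=
  (smul_one_eq_diagonal' _).symm

namespace EquivStr

variable {G : Subgroup SL2} {ι : Type} [Fintype ι] [DecidableEq ι] {d : ℤ}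
  (φ : EquivStr G (stdB fun _ : ι => d))

theorem a_smul (g : G) {l : ℂ} {v : V2} (hl : l ≠ 0) (hv : v ≠ 0) :
    φ.a g (l • v) = φ.a g v := by
  have h := φ.compat g l v hl hv
  rw [stdB_mult_eq_smul_one, stdB_mult_eq_smul_one, mul_smul_one, smul_one_mul] at h
  exact smul_right_injective _ (zpow_ne_zero d hl) h

theorem a_eq (g : G) {v w : V2} (hv : v ≠ 0) (hw : w ≠ 0) : φ.a g v = φ.a g w := by
  ext i j
  exact eq_of_smul_invariant (A := fun u => φ.a g u i j) (φ.holo g i j)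
    (fun l u hl hu => by simp only [φ.a_smul g hl hu]) hv hw

def fiberRep : G →* (Matrix ι ι ℂ)ˣ where
  toFun g := (φ.unit g _ vec_one_zero_ne_zero).unit
  map_one' := Units.ext (φ.one _ vec_one_zero_ne_zero)
  map_mul' g h := Units.ext <| by
    show φ.a (g * h) ![1, 0] = φ.a g ![1, 0] * φ.a h ![1, 0]
    rw [φ.mul g h _ vec_one_zero_ne_zero,
      φ.a_eq g (sact_ne_zero _ vec_one_zero_ne_zero) vec_one_zero_ne_zero]

theorem a_eq_fiberRep (g : G) {v : V2} (hv : v ≠ 0) :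
    φ.a g v = (φ.fiberRep g : Matrix ι ι ℂ) :=
  φ.a_eq g hv vec_one_zero_ne_zero

end EquivStr

def EqIso.ofAEq {G : Subgroup SL2} {E : HVB} {φ ψ : EquivStr G E}
    (h : ∀ (g : G) (v : V2), v ≠ 0 → φ.a g v = ψ.a g v) : EqIso φ ψ where
  hom :=
    { A := fun _ => 1
      holo := fun _ _ => differentiableOn_const _
      compat := fun _ _ _ _ => by rw [one_mul, mul_one] }
  iso _ _ := by
    rw [Matrix.mulVecLin_one]
    exact Function.bijective_id
  equivariant g v hv := by
    rw [one_mul, mul_one]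
    exact h g v hv

def splitLift (H : Subgroup PGL2) (γ : ↥H →* SL2) (hγ : ∀ h : ↥H, βhom (γ h) = (h : PGL2)) :
    ↥H →* ↥(H.comap βhom) :=
  γ.codRestrict _ fun h => show βhom (γ h) ∈ H by rw [hγ]; exact h.2

namespace HEquivStr

variable {H : Subgroup PGL2} {ι : Type} [Fintype ι] [DecidableEq ι] {d : ℤ}
  (φ : HEquivStr H (stdB fun _ : ι => d))

theorem fiberRep_neg_one :
    (φ.toStr.fiberRep ⟨-1, neg_one_mem_preH H⟩ : Matrix ι ι ℂ) = (-1 : ℂ) ^ d • 1 := by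
  rw [← φ.toStr.a_eq_fiberRep _ vec_one_zero_ne_zero, φ.negOne _ vec_one_zero_ne_zero,
    stdB_mult_eq_smul_one]
  rfl

theorem fiberRep_eq_sgn_smul (γ : ↥H →* SL2) (hγ : ∀ h : ↥H, βhom (γ h) = (h : PGL2))
    (g : ↥(H.comap βhom)) :
    (φ.toStr.fiberRep g : Matrix ι ι ℂ)
      = sgn H γ g ^ d • (φ.toStr.fiberRep (splitLift H γ hγ (βres H g)) : Matrix ι ι ℂ) := by
  rcases lift_dichotomy H γ hγ g with hg | hg
  · have hlift : splitLift H γ hγ (βres H g) = g := Subtype.ext hg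
    rw [sgn, if_pos hg, one_zpow, one_smul, hlift]
  · have hlift : splitLift H γ hγ (βres H g) = ⟨-1, neg_one_mem_preH H⟩ * g :=
      Subtype.ext (by rw [Subgroup.coe_mul, neg_one_mul]; exact hg)
    rw [sgn, if_neg (by rw [hg]; exact neg_ne_self_SL2 _), hlift, map_mul, Units.val_mul,
      fiberRep_neg_one, smul_one_mul, smul_smul, ← mul_zpow, neg_one_mul, neg_neg, one_zpow,
      one_smul]

end HEquivStr

theorem statement11_general (H : Subgroup PGL2)
    (γ : ↥H →* SL2) (hγ : ∀ h : ↥H, βhom (γ h) = (h : PGL2))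
    (d : ℤ) (r : ℕ) (φ : HEquivStr H (stdB (fun _ : Fin r => d))) :
    ∃ (m : ℕ) (θ : ↥H →* (Matrix (Fin m) (Fin m) ℂ)ˣ),
      Nonempty (EqIso φ.toStr (splitTwistH H γ hγ d m θ).toStr) := by
  refine ⟨r, φ.toStr.fiberRep.comp (splitLift H γ hγ), ⟨EqIso.ofAEq fun g v hv => ?_⟩⟩
  rw [φ.toStr.a_eq_fiberRep g hv, φ.fiberRep_eq_sgn_smul γ hγ g]
  rfl

/-- Proposition 3.4(1) of the paper. Let `H` be a closed topological subgroup
of `PGL(2,ℂ)` containing a compact subgroup whose Zariski closure contains `H`, and assume the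
central extension `1 → ℤ/2ℤ → 𝓗 → H → 1` splits, with a fixed splitting `γ : H → 𝓗`.  Fix
`d ∈ ℤ` and let `W = O(d)^{⊕r}` be an `H`-equivariant holomorphic vector bundle on `ℂP¹`.  Then
there is a finite dimensional complex `H`-module `M` such that `W` is holomorphically and
`H`-equivariantly isomorphic to `O(d) ⊗_ℂ M`, where `O(d)` carries the `H`-equivariant structure
obtained via `γ` from the natural `SL(2,ℂ)`-action on `O(d)`. -/
theorem statement11 (H : Subgroup PGL2) (hH : GoodPGL H)
    (γ : ↥H →* SL2) (hγ : ∀ h : ↥H, βhom (γ h) = (h : PGL2))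
    (d : ℤ) (r : ℕ) (φ : HEquivStr H (stdB (fun _ : Fin r => d))) :
    ∃ (m : ℕ) (θ : ↥H →* (Matrix (Fin m) (Fin m) ℂ)ˣ),
      Nonempty (EqIso φ.toStr (splitTwistH H γ hγ d m θ).toStr) :=
  statement11_general H γ hγ d r φ
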